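/- arXiv:1810.11773 — 4 statements merged into one kernel-verified Lean document; each statement's English description precedes it below -/
import Mathlib

section
/- Let r ≥ 3, let e ≤ -1 be an integer, and for each j = 1,…,r let α_j ≥ 2 and β_j ≥ 1 be integers. For each j, let c_j be a nonempty list of positive integers whose associated T-sequence has final value equal to α_j (i.e., T_{c_j}(n_j) = α_j where n_j is the length of c_j). Then, as rational numbers, (α_1·α_2⋯α_r)·(-e + β_1/α_1 + β_2/α_2 + ⋯ + β_r/α_r) is strictly greater than the sum over all j of the sum of the entries of c_j. -/
def Tseq (a : ℕ → ℤ) : ℕ → ℤ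
  | 0 => 1
  | 1 => a 1
  | (m + 2) => a (m + 2) * Tseq a (m + 1) + Tseq a m

def TlistFinal (l : List ℤ) : ℤ :=
  Tseq (fun k => l.getD (k - 1) 0) l.length

lemma tseq_pos (a : ℕ → ℤ) : ∀ n, (∀ k, 1 ≤ k → k ≤ n → 1 ≤ a k) → 1 ≤ Tseq a n
  | 0, _ => le_refl 1
  | 1, h => h 1 le_rfl le_rfl
  | (m + 2), h => by
      have h1 : 1 ≤ Tseq a (m + 1) := tseq_pos a (m + 1) (fun k hk hk' => h k hk (hk'.trans (by omega)))
      have h2 : 1 ≤ Tseq a m := tseq_pos a m (fun k hk hk' => h k hk (hk'.trans (by omega)))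
      have h3 : 1 ≤ a (m + 2) := h (m + 2) (by omega) le_rfl
      show 1 ≤ a (m + 2) * Tseq a (m + 1) + Tseq a m
      nlinarith

lemma tseq_sum (a : ℕ → ℤ) : ∀ n, (∀ k, 1 ≤ k → k ≤ n → 1 ≤ a k) →
    (∑ k ∈ Finset.Icc 1 n, a k) ≤ Tseq a n
  | 0, _ => by simp [Tseq]
  | 1, _ => by simp [Tseq]
  | (m + 2), h => by
      have ih : (∑ k ∈ Finset.Icc 1 (m + 1), a k) ≤ Tseq a (m + 1) :=
        tseq_sum a (m + 1) (fun k hk hk' => h k hk (hk'.trans (by omega)))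
      have h1 : 1 ≤ Tseq a (m + 1) := tseq_pos a (m + 1) (fun k hk hk' => h k hk (hk'.trans (by omega)))
      have h2 : 1 ≤ Tseq a m := tseq_pos a m (fun k hk hk' => h k hk (hk'.trans (by omega)))
      have h3 : 1 ≤ a (m + 2) := h (m + 2) (by omega) le_rfl
      have hsplit : (∑ k ∈ Finset.Icc 1 (m + 2), a k)
          = (∑ k ∈ Finset.Icc 1 (m + 1), a k) + a (m + 2) := by
        rw [← Finset.sum_Icc_succ_top (by omega)]
      rw [hsplit]
      show _ ≤ a (m + 2) * Tseq a (m + 1) + Tseq a m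
      nlinarith

lemma sum_getD (l : List ℤ) : (∑ i ∈ Finset.range l.length, l.getD i 0) = l.sum := by
  induction l with
  | nil => simp
  | cons x t ih =>
      rw [List.length_cons, Finset.sum_range_succ']
      simp only [List.getD_cons_succ, List.getD_cons_zero, List.sum_cons, ih]
      ring

lemma sum_le_TlistFinal (l : List ℤ) (hpos : ∀ x ∈ l, 0 < x) : l.sum ≤ TlistFinal l := by
  have hkey : ∀ k, 1 ≤ k → k ≤ l.length → 1 ≤ l.getD (k - 1) 0 := by
    intro k hk hk'
    have hlt : k - 1 < l.length := by omega
    rw [List.getD_eq_getElem l 0 hlt]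
    exact hpos _ (l.getElem_mem hlt)
  have h1 := tseq_sum (fun k => l.getD (k - 1) 0) l.length hkey
  have h2 : (∑ k ∈ Finset.Icc 1 l.length, l.getD (k - 1) 0) = l.sum := by
    rw [← sum_getD l]
    refine Finset.sum_bij' (fun k _ => k - 1) (fun i _ => i + 1) ?_ ?_ ?_ ?_ ?_
    all_goals intro x hx
    all_goals simp only [Finset.mem_Icc, Finset.mem_range] at hx ⊢
    all_goals omega
  rw [TlistFinal]
  calc l.sum = _ := h2.symm
    _ ≤ _ := h1

lemma pow_bound : ∀ r : ℕ, 3 ≤ r → 4 * r ≤ 3 * 2 ^ (r - 1) := by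
  intro r hr
  induction r with
  | zero => omega
  | succ n ih =>
      rcases Nat.lt_or_ge n 3 with h | h
      · interval_cases n <;> simp_all <;> omega
      · have := ih (by omega)
        have hn : n + 1 - 1 = (n - 1) + 1 := by omega
        rw [hn, pow_succ]
        have : 4 ≤ 3 * 2 ^ (n - 1) := by
          have : (1:ℕ) * 2 ≤ 2 ^ (n - 1) := by
            calc (1:ℕ) * 2 = 2 ^ 1 := by norm_num
              _ ≤ 2 ^ (n - 1) := Nat.pow_le_pow_right (by norm_num) (by omega)
          omega
        omega

/-- Let `r ≥ 3`, `e ≤ -1`, and for `j = 1, …, r` let `α j ≥ 2`, `β j ≥ 1` be integers and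
`c j` a nonempty list of positive integers whose final continuant equals `α j`. Then the
determinant `(α 1 ⋯ α r) * (-e + β 1/α 1 + ⋯ + β r/α r)` of the corresponding Montesinos
link strictly exceeds the total number of crossings `∑ j, (c j).sum`. -/
theorem montesinos_det_gt_crossings (r : ℕ) (hr : 3 ≤ r) (e : ℤ) (he : e ≤ -1)
    (α β : ℕ → ℤ) (hα : ∀ j, 1 ≤ j → j ≤ r → 2 ≤ α j) (hβ : ∀ j, 1 ≤ j → j ≤ r → 1 ≤ β j)
    (c : ℕ → List ℤ)
    (hc : ∀ j, 1 ≤ j → j ≤ r → c j ≠ [])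
    (hcpos : ∀ j, 1 ≤ j → j ≤ r → ∀ x ∈ c j, 0 < x)
    (hcT : ∀ j, 1 ≤ j → j ≤ r → TlistFinal (c j) = α j) :
    (∑ j ∈ Finset.Icc 1 r, ((c j).sum : ℚ)) <
      (∏ j ∈ Finset.Icc 1 r, (α j : ℚ)) *
        (-(e : ℚ) + ∑ j ∈ Finset.Icc 1 r, (β j : ℚ) / (α j : ℚ)) := by
  have hmem : ∀ j ∈ Finset.Icc 1 r, 1 ≤ j ∧ j ≤ r := by
    intro j hj; exact Finset.mem_Icc.mp hj
  -- integer facts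
  set S : ℤ := ∑ j ∈ Finset.Icc 1 r, α j with hS
  set P : ℤ := ∏ j ∈ Finset.Icc 1 r, α j with hP
  have hPpos : 0 < P := Finset.prod_pos (fun j hj => by
    have := hα j (hmem j hj).1 (hmem j hj).2; omega)
  -- each α j ≤ P / 2^(r-1): 2^(r-1) * α j ≤ P
  have hαP : ∀ j ∈ Finset.Icc 1 r, 2 ^ (r - 1) * α j ≤ P := by
    intro j hj
    have herase : P = α j * ∏ i ∈ (Finset.Icc 1 r).erase j, α i :=
      (Finset.mul_prod_erase _ _ hj).symm
    have hcard : ((Finset.Icc 1 r).erase j).card = r - 1 := by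
      rw [Finset.card_erase_of_mem hj, Nat.card_Icc]; omega
    have hge : (2 : ℤ) ^ (r - 1) ≤ ∏ i ∈ (Finset.Icc 1 r).erase j, α i := by
      calc (2:ℤ) ^ (r-1) = ∏ _i ∈ (Finset.Icc 1 r).erase j, (2:ℤ) := by
            rw [Finset.prod_const, hcard]
        _ ≤ _ := Finset.prod_le_prod (fun i _ => by norm_num)
            (fun i hi => by
              have hi' := Finset.mem_of_mem_erase hi
              exact hα i (hmem i hi').1 (hmem i hi').2)
    have hαj : (2:ℤ) ≤ α j := hα j (hmem j hj).1 (hmem j hj).2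
    calc (2:ℤ) ^ (r-1) * α j ≤ (∏ i ∈ (Finset.Icc 1 r).erase j, α i) * α j :=
          mul_le_mul_of_nonneg_right hge (by omega)
      _ = P := by rw [herase]; ring
  have hsumP : 2 ^ (r - 1) * S ≤ r * P := by
    have := Finset.sum_le_sum hαP
    rw [← Finset.mul_sum, Finset.sum_const, Nat.card_Icc] at this
    simpa [hS, Nat.add_sub_cancel] using this
  have hpow : (4 : ℤ) * r ≤ 3 * 2 ^ (r - 1) := by exact_mod_cast pow_bound r hr
  have hpowpos : (0:ℤ) < 2 ^ (r - 1) := by positivity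
  have hSP : S < P := by nlinarith
  -- crossing sum ≤ S
  have hcS : (∑ j ∈ Finset.Icc 1 r, (c j).sum) ≤ S := by
    apply Finset.sum_le_sum
    intro j hj
    calc (c j).sum ≤ TlistFinal (c j) := sum_le_TlistFinal _ (hcpos j (hmem j hj).1 (hmem j hj).2)
      _ = α j := hcT j (hmem j hj).1 (hmem j hj).2
  -- rational side
  have hfac : (1 : ℚ) ≤ -(e : ℚ) + ∑ j ∈ Finset.Icc 1 r, (β j : ℚ) / (α j : ℚ) := by
    have he' : (1:ℚ) ≤ -(e:ℚ) := by
      have : (e:ℚ) ≤ -1 := by exact_mod_cast he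
      linarith
    have hnn : (0:ℚ) ≤ ∑ j ∈ Finset.Icc 1 r, (β j : ℚ) / (α j : ℚ) := by
      apply Finset.sum_nonneg
      intro j hj
      have hb : (1:ℚ) ≤ (β j : ℚ) := by exact_mod_cast hβ j (hmem j hj).1 (hmem j hj).2
      have ha : (2:ℚ) ≤ (α j : ℚ) := by exact_mod_cast hα j (hmem j hj).1 (hmem j hj).2
      positivity
    linarith
  have hPQ : (0:ℚ) < (P : ℚ) := by exact_mod_cast hPpos
  have hPcast : ((P : ℤ) : ℚ) = ∏ j ∈ Finset.Icc 1 r, (α j : ℚ) := by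
    push_cast [hP]; ring
  calc (∑ j ∈ Finset.Icc 1 r, ((c j).sum : ℚ))
      = ((∑ j ∈ Finset.Icc 1 r, (c j).sum : ℤ) : ℚ) := by push_cast; ring
    _ < (P : ℚ) := by exact_mod_cast lt_of_le_of_lt hcS hSP
    _ ≤ (∏ j ∈ Finset.Icc 1 r, (α j : ℚ)) *
        (-(e : ℚ) + ∑ j ∈ Finset.Icc 1 r, (β j : ℚ) / (α j : ℚ)) := by
        rw [← hPcast]
        exact le_mul_of_one_le_right hPQ.le hfac
end

section
/- Let α_1, α_2, β_1, β_2 be positive integers with α_1 ≥ 2, α_2 ≥ 2, and β_1·α_2 + β_2·α_1 > α_1·α_2 (equivalently β_1/α_1 + β_2/α_2 > 1). Let a = (a_1,…,a_s) and b = (b_1,…,b_t) be nonempty lists of positive integers whose associated T-sequences have final values T_a(s) = α_1 and T_b(t) = α_2. Then α_1·β_2 + α_2·β_1 > (a_1 + ⋯ + a_s) + (b_1 + ⋯ + b_t). -/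

lemma tseq_ge : ∀ (m : ℕ) (f : ℕ → ℤ), (∀ k, 1 ≤ k → k ≤ m → 1 ≤ f k) →
    1 ≤ Tseq f m ∧ (∑ k ∈ Finset.range m, f (k + 1)) ≤ Tseq f m
  | 0, f, _ => by simp [Tseq]
  | 1, f, hf => by
      have := hf 1 le_rfl le_rfl
      simp [Tseq, this]
  | (m + 2), f, hf => by
      obtain ⟨h1, h2⟩ := tseq_ge (m + 1) f (fun k hk hk' => hf k hk (by omega))
      obtain ⟨h3, _⟩ := tseq_ge m f (fun k hk hk' => hf k hk (by omega))
      have hfm : 1 ≤ f (m + 2) := hf (m + 2) (by omega) le_rfl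
      constructor
      · show 1 ≤ f (m + 2) * Tseq f (m + 1) + Tseq f m
        nlinarith
      · rw [Finset.sum_range_succ]
        show _ ≤ f (m + 2) * Tseq f (m + 1) + Tseq f m
        nlinarith

lemma list_sum_eq_range (l : List ℤ) :
    l.sum = ∑ k ∈ Finset.range l.length, l.getD k 0 := by
  induction l with
  | nil => simp
  | cons x xs ih => simp [Finset.sum_range_succ', ih, add_comm]

/-- Let `α₁, α₂ ≥ 2` and `β₁, β₂ ≥ 1` be integers with `β₁·α₂ + β₂·α₁ > α₁·α₂`
(i.e. `β₁/α₁ + β₂/α₂ > 1`), and let `a`, `b` be nonempty lists of positive integers with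
final continuants `α₁` and `α₂` respectively. Then the determinant `α₁·β₂ + α₂·β₁` of the
Montesinos link `M(0;(α₁,β₁),(α₂,β₂))` strictly exceeds the total number of crossings
`a.sum + b.sum`. -/
theorem montesinos_two_tangle_det_gt_crossings (α₁ α₂ β₁ β₂ : ℤ)
    (hα₁ : 2 ≤ α₁) (hα₂ : 2 ≤ α₂) (hβ₁ : 1 ≤ β₁) (hβ₂ : 1 ≤ β₂)
    (hgt : α₁ * α₂ < β₁ * α₂ + β₂ * α₁)
    (a b : List ℤ) (ha : a ≠ []) (hb : b ≠ [])
    (hapos : ∀ x ∈ a, 0 < x) (hbpos : ∀ x ∈ b, 0 < x)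
    (haT : TlistFinal a = α₁) (hbT : TlistFinal b = α₂) :
    a.sum + b.sum < α₁ * β₂ + α₂ * β₁ := by
  have h1 := sum_le_TlistFinal a hapos
  have h2 := sum_le_TlistFinal b hbpos
  rw [haT] at h1
  rw [hbT] at h2
  nlinarith
end

section
/- Let R = ℤ[t,t⁻¹], S₁ = [[-t, 1], [0, 1]] and S₂⁻¹ = [[1, 0], [1, -t⁻¹]]. Let (p_1,q_1),…,(p_s,q_s) be a nonempty list of pairs of positive integers, and let M = S₁^{p_1}·(S₂⁻¹)^{q_1}·S₁^{p_2}·(S₂⁻¹)^{q_2}⋯S₁^{p_s}·(S₂⁻¹)^{q_s}. Then every entry of M is sign-coherent: for each of the four entries f of M and every integer i, (-1)^i times the coefficient of t^i in f is nonnegative. -/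
open LaurentPolynomial

/-- The image of the braid generator `σ₁` of `B₃` under the reduced Burau representation:
the matrix `[[-t, 1], [0, 1]]` over `ℤ[t,t⁻¹]`. -/
noncomputable def S₁ : Matrix (Fin 2) (Fin 2) (LaurentPolynomial ℤ) :=
  !![-T 1, 1; 0, 1]

/-- The matrix `[[1, 0], [1, -t⁻¹]]` over `ℤ[t,t⁻¹]`, the image of `σ₂⁻¹` under the
reduced Burau representation. -/
noncomputable def S₂inv : Matrix (Fin 2) (Fin 2) (LaurentPolynomial ℤ) :=
  !![1, 0; 1, -T (-1)]

/-! Sign-coherent Laurent polynomials form a subsemiring of `ℤ[t,t⁻¹]`, because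
`(-1)^(a+b) = (-1)^a (-1)^b` makes every term of a product coefficient nonnegative after the
sign twist. The entries of `S₁` and `S₂inv` are sign-coherent, so the matrices with
sign-coherent entries, a subsemiring of `2 × 2` matrices, contain every product of their powers. -/

namespace LaurentPolynomial

def signCoherent : Subsemiring ℤ[T;T⁻¹] where
  carrier := {f | ∀ k : ℤ, 0 ≤ (Int.negOnePow k : ℤ) * f.coeff k}
  zero_mem' k := by simp
  one_mem' k := by
    rw [← T_zero, T_apply]
    split_ifs with h
    · simp [← h]
    · simp
  add_mem' {f g} hf hg k := by
    rw [AddMonoidAlgebra.coeff_add, Finsupp.add_apply, mul_add]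
    exact add_nonneg (hf k) (hg k)
  mul_mem' {f g} hf hg k := by
    classical
    rw [AddMonoidAlgebra.coeff_mul, Finsupp.sum, Finset.mul_sum]
    refine Finset.sum_nonneg fun a _ => ?_
    rw [Finsupp.sum, Finset.mul_sum]
    refine Finset.sum_nonneg fun b _ => ?_
    split_ifs with hab
    · subst hab
      calc 0 ≤ ((a.negOnePow : ℤ) * f.coeff a) * ((b.negOnePow : ℤ) * g.coeff b) :=
            mul_nonneg (hf a) (hg b)
        _ = _ := by rw [Int.negOnePow_add]; push_cast; ring
    · simp

theorem neg_T_mem_signCoherent {n : ℤ} (hn : Odd n) : -T n ∈ signCoherent := fun k => by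
  rw [AddMonoidAlgebra.coeff_neg, Finsupp.neg_apply, T_apply]
  split_ifs with h
  · simp [← h, Int.negOnePow_odd _ hn]
  · simp

end LaurentPolynomial

theorem S₁_mem_matrix_signCoherent : S₁ ∈ signCoherent.matrix := by
  intro i j
  fin_cases i <;> fin_cases j <;> simp [S₁, one_mem, zero_mem, neg_T_mem_signCoherent odd_one]

theorem S₂inv_mem_matrix_signCoherent : S₂inv ∈ signCoherent.matrix := by
  intro i j
  fin_cases i <;> fin_cases j <;>
    simp [S₂inv, one_mem, zero_mem, neg_T_mem_signCoherent odd_neg_one]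

theorem burau_word_entries_signCoherent_general (pq : List (ℕ × ℕ)) :
    ∀ i j : Fin 2, ∀ k : ℤ,
      0 ≤ (Int.negOnePow k : ℤ) *
        ((pq.map fun x => S₁ ^ x.1 * S₂inv ^ x.2).prod i j).coeff k := by
  have hmem : (pq.map fun x => S₁ ^ x.1 * S₂inv ^ x.2).prod ∈ signCoherent.matrix := by
    refine Subsemiring.list_prod_mem _ fun M hM => ?_
    obtain ⟨x, -, rfl⟩ := List.mem_map.1 hM
    exact mul_mem (pow_mem S₁_mem_matrix_signCoherent _) (pow_mem S₂inv_mem_matrix_signCoherent _)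
  exact fun i j => hmem i j

/-- For a nonempty list `(p₁,q₁), …, (p_s,q_s)` of pairs of positive integers, every entry
of the Burau matrix `M = S₁^{p₁}·S₂inv^{q₁} ⋯ S₁^{p_s}·S₂inv^{q_s}` of the 3-braid
`σ₁^{p₁}σ₂^{-q₁}⋯σ₁^{p_s}σ₂^{-q_s}` is sign-coherent: `(-1)^k` times the coefficient of
`t^k` is nonnegative, for every integer `k`. -/
theorem burau_word_entries_signCoherent (pq : List (ℕ × ℕ)) (hne : pq ≠ [])
    (hpos : ∀ x ∈ pq, 0 < x.1 ∧ 0 < x.2) :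
    ∀ i j : Fin 2, ∀ k : ℤ,
      0 ≤ (Int.negOnePow k : ℤ) *
        ((pq.map fun x => S₁ ^ x.1 * S₂inv ^ x.2).prod i j).coeff k :=
  burau_word_entries_signCoherent_general pq
end

section
/- Let R = ℤ[t,t⁻¹], S₁ = [[-t, 1], [0, 1]] and S₂⁻¹ = [[1, 0], [1, -t⁻¹]]. Let (p_1,q_1),…,(p_s,q_s) be a nonempty list of pairs of positive integers, set p = p_1+⋯+p_s and q = q_1+⋯+q_s, and let M = S₁^{p_1}·(S₂⁻¹)^{q_1}⋯S₁^{p_s}·(S₂⁻¹)^{q_s}. Then the trace of M is a Laurent polynomial whose coefficient of t^i is zero for i > p and for i < -q, and for every integer i with -q ≤ i ≤ p the coefficient of t^i in trace(M) is nonzero with sign (-1)^i (i.e., (-1)^i times this coefficient is strictly positive). In particular trace(M) has no gaps: its support is exactly the integers from -q to p. -/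
/-!
Substituting `t ↦ -t` turns `S₁` and `S₂inv` into matrices with entries in `ℕ[t,t⁻¹]` and
multiplies the coefficient of `tᵏ` by `(-1)ᵏ`, so the claim becomes: the trace of the substituted
product, a Laurent polynomial with natural coefficients, has support exactly `[-q, p]`.
Over `ℕ` nothing cancels: the support of a sum is the union and the support of a product is the
sumset of the supports. By induction over the blocks `S₁^{pᵢ} S₂inv^{qᵢ}`, every entry of the
product has support in `[-q, p]`, the `(0,0)` entry covers `[1-q, p]`, and the entries `(0,1)`,
`(1,0)`, `(1,1)` contain `-q`, `1-q`, `-q`; hence the trace covers `[-q, p]`.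
-/

open LaurentPolynomial

open Finset Pointwise

namespace LaurentPolynomial

section CanonicallyOrdered

variable {R : Type*} [CommSemiring R] [PartialOrder R] [CanonicallyOrderedAdd R]

theorem coeff_mul_coeff_le_coeff_mul (f g : R[T;T⁻¹]) (i j : ℤ) :
    f.coeff i * g.coeff j ≤ (f * g).coeff (i + j) := by
  classical
  by_cases hi : i ∈ f.coeff.support
  · by_cases hj : j ∈ g.coeff.support
    · rw [AddMonoidAlgebra.coeff_mul]
      refine le_trans ?_ (single_le_sum (fun _ _ => zero_le) hi)
      refine le_trans ?_ (single_le_sum (fun _ _ => zero_le) hj)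
      simp
    · simp [Finsupp.notMem_support_iff.1 hj]
  · simp [Finsupp.notMem_support_iff.1 hi]

theorem support_coeff_add (f g : R[T;T⁻¹]) :
    (f + g).coeff.support = f.coeff.support ∪ g.coeff.support := by
  ext k
  simp only [Finsupp.mem_support_iff, AddMonoidAlgebra.coeff_add, Finsupp.add_apply, mem_union,
    ne_eq, add_eq_zero, not_and_or]

theorem support_coeff_mul [NoZeroDivisors R] (f g : R[T;T⁻¹]) :
    (f * g).coeff.support = f.coeff.support + g.coeff.support := by
  classical
  refine (AddMonoidAlgebra.support_coeff_mul_subset f g).antisymm fun k hk => ?_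
  obtain ⟨i, hi, j, hj, rfl⟩ := mem_add.1 hk
  rw [Finsupp.mem_support_iff] at hi hj ⊢
  exact fun h => mul_ne_zero hi hj (nonpos_iff_eq_zero.1 (h ▸ coeff_mul_coeff_le_coeff_mul f g i j))

theorem support_coeff_matrix_mul_apply [NoZeroDivisors R] (A B : Matrix (Fin 2) (Fin 2) R[T;T⁻¹])
    (i j : Fin 2) :
    ((A * B) i j).coeff.support = ((A i 0).coeff.support + (B 0 j).coeff.support) ∪
      ((A i 1).coeff.support + (B 1 j).coeff.support) := by
  rw [Matrix.mul_apply, Fin.sum_univ_two, support_coeff_add, support_coeff_mul, support_coeff_mul]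

end CanonicallyOrdered

theorem support_coeff_T {R : Type*} [Semiring R] [Nontrivial R] (n : ℤ) :
    (T n : R[T;T⁻¹]).coeff.support = {n} :=
  Finsupp.support_single _ one_ne_zero

end LaurentPolynomial

theorem Int.Icc_add_Icc {a b c d : ℤ} (hab : a ≤ b) (hcd : c ≤ d) :
    Icc a b + Icc c d = Icc (a + c) (b + d) := by
  refine (Icc_add_Icc_subset a b c d).antisymm fun k hk => ?_
  rw [mem_Icc] at hk
  exact mem_add.2 ⟨max a (k - d), by simp; omega, k - max a (k - d), by simp; omega, by ring⟩

noncomputable def negTPow : Multiplicative ℤ →* ℤ[T;T⁻¹] where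
  toFun n := C (n.toAdd.negOnePow : ℤ) * T n.toAdd
  map_one' := by simp
  map_mul' m n := by
    simp only [toAdd_mul, Int.negOnePow_add, Units.val_mul, map_mul, T_add]
    ring

noncomputable def evalNegT : ℕ[T;T⁻¹] →ₐ[ℕ] ℤ[T;T⁻¹] := AddMonoidAlgebra.lift ℕ ℤ[T;T⁻¹] ℤ negTPow

theorem evalNegT_T (n : ℤ) : evalNegT (T n) = C (n.negOnePow : ℤ) * T n :=
  (AddMonoidAlgebra.lift_single _ _ _).trans (one_smul _ _)

theorem coeff_evalNegT (f : ℕ[T;T⁻¹]) (k : ℤ) :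
    (evalNegT f).coeff k = k.negOnePow * f.coeff k := by
  induction f using LaurentPolynomial.induction_on' with
  | add f g hf hg => simp [hf, hg, mul_add]
  | C_mul_T n a =>
    rw [← single_eq_C_mul_T, evalNegT, AddMonoidAlgebra.lift_single]
    simp only [negTPow, MonoidHom.coe_mk, OneHom.coe_mk, toAdd_ofAdd]
    rw [nsmul_eq_mul, ← mul_assoc, ← map_natCast C, ← map_mul, ← single_eq_C_mul_T]
    simp only [AddMonoidAlgebra.coeff_single, Finsupp.single_apply]
    split_ifs with h
    · rw [h]; ring
    · simp

noncomputable def S₁Pos : Matrix (Fin 2) (Fin 2) ℕ[T;T⁻¹] := !![T 1, 1; 0, 1]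

noncomputable def S₂invPos : Matrix (Fin 2) (Fin 2) ℕ[T;T⁻¹] := !![1, 0; 1, T (-1)]

theorem mapMatrix_evalNegT_S₁Pos : evalNegT.mapMatrix S₁Pos = S₁ := by
  ext i j; fin_cases i <;> fin_cases j <;> simp [S₁Pos, S₁, evalNegT_T]

theorem mapMatrix_evalNegT_S₂invPos : evalNegT.mapMatrix S₂invPos = S₂inv := by
  ext i j; fin_cases i <;> fin_cases j <;> simp [S₂invPos, S₂inv, evalNegT_T]

theorem S₁Pos_pow (p : ℕ) :
    ∃ g : ℕ[T;T⁻¹], S₁Pos ^ p = !![T p, g; 0, 1] ∧ g.coeff.support = Icc 0 ((p : ℤ) - 1) := by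
  induction p with
  | zero => exact ⟨0, by simp [Matrix.one_fin_two], by simp⟩
  | succ p ih =>
    obtain ⟨g, hpow, hg⟩ := ih
    refine ⟨T p + g, ?_, ?_⟩
    · rw [pow_succ, hpow, S₁Pos]
      simp only [Matrix.mul_fin_two, zero_mul, mul_zero, mul_one, add_zero, zero_add, ← T_add,
        Nat.cast_succ]
    · rw [support_coeff_add, support_coeff_T, hg]
      ext k; simp only [mem_union, mem_singleton, mem_Icc]; omega

theorem S₂invPos_pow (q : ℕ) :
    ∃ h : ℕ[T;T⁻¹], S₂invPos ^ q = !![1, 0; h, T (-q)] ∧ h.coeff.support = Icc (1 - q : ℤ) 0 := by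
  induction q with
  | zero => exact ⟨0, by simp [Matrix.one_fin_two], by simp⟩
  | succ q ih =>
    obtain ⟨h, hpow, hh⟩ := ih
    refine ⟨h + T (-q), ?_, ?_⟩
    · rw [pow_succ, hpow, S₂invPos]
      simp only [Matrix.mul_fin_two, zero_mul, mul_zero, mul_one, add_zero, zero_add, ← T_add,
        Nat.cast_succ, neg_add]
    · rw [support_coeff_add, support_coeff_T, hh]
      ext k; simp only [mem_union, mem_singleton, mem_Icc]; omega

structure BurauSupport (M : Matrix (Fin 2) (Fin 2) ℕ[T;T⁻¹]) (P Q : ℤ) : Prop where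
  support_subset : ∀ i j, (M i j).coeff.support ⊆ Icc (-Q) P
  Icc_subset_support_00 : Icc (1 - Q) P ⊆ (M 0 0).coeff.support
  mem_support_01 : -Q ∈ (M 0 1).coeff.support
  mem_support_10 : 1 - Q ∈ (M 1 0).coeff.support
  mem_support_11 : -Q ∈ (M 1 1).coeff.support

namespace BurauSupport

variable {B M : Matrix (Fin 2) (Fin 2) ℕ[T;T⁻¹]} {p q P Q : ℤ}

theorem one_sub_le (h : BurauSupport M P Q) : 1 - Q ≤ P :=
  (mem_Icc.1 (h.support_subset 1 0 h.mem_support_10)).2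

theorem mul (hB : BurauSupport B p q) (hM : BurauSupport M P Q) :
    BurauSupport (B * M) (p + P) (q + Q) where
  support_subset i j := by
    rw [support_coeff_matrix_mul_apply, neg_add]
    exact union_subset
      ((add_subset_add (hB.support_subset i 0) (hM.support_subset 0 j)).trans
        (Icc_add_Icc_subset ..))
      ((add_subset_add (hB.support_subset i 1) (hM.support_subset 1 j)).trans
        (Icc_add_Icc_subset ..))
  Icc_subset_support_00 k hk := by
    rw [mem_Icc] at hk
    rw [support_coeff_matrix_mul_apply]
    rcases hk.1.eq_or_lt with hk₁ | hk₁
    · refine mem_union_right _ ?_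
      rw [← hk₁, show 1 - (q + Q) = -q + (1 - Q) by ring]
      exact add_mem_add hB.mem_support_01 hM.mem_support_10
    · refine mem_union_left _ (add_subset_add hB.Icc_subset_support_00 hM.Icc_subset_support_00 ?_)
      rw [Int.Icc_add_Icc hB.one_sub_le hM.one_sub_le, mem_Icc]
      omega
  mem_support_01 := by
    rw [support_coeff_matrix_mul_apply, neg_add]
    exact mem_union_right _ (add_mem_add hB.mem_support_01 hM.mem_support_11)
  mem_support_10 := by
    rw [support_coeff_matrix_mul_apply, show 1 - (q + Q) = -q + (1 - Q) by ring]
    exact mem_union_right _ (add_mem_add hB.mem_support_11 hM.mem_support_10)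
  mem_support_11 := by
    rw [support_coeff_matrix_mul_apply, neg_add]
    exact mem_union_right _ (add_mem_add hB.mem_support_11 hM.mem_support_11)

theorem support_coeff_trace (h : BurauSupport M P Q) : M.trace.coeff.support = Icc (-Q) P := by
  rw [Matrix.trace_fin_two, support_coeff_add]
  refine (union_subset (h.support_subset 0 0) (h.support_subset 1 1)).antisymm fun k hk => ?_
  rw [mem_Icc] at hk
  rcases hk.1.eq_or_lt with rfl | hk₁
  · exact mem_union_right _ h.mem_support_11
  · exact mem_union_left _ (h.Icc_subset_support_00 (mem_Icc.2 ⟨by omega, hk.2⟩))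

end BurauSupport

theorem burauSupport_S₁Pos_pow_mul_S₂invPos_pow {p q : ℕ} (hp : 0 < p) (hq : 0 < q) :
    BurauSupport (S₁Pos ^ p * S₂invPos ^ q) p q := by
  obtain ⟨g, hS₁, hg⟩ := S₁Pos_pow p
  obtain ⟨h, hS₂, hh⟩ := S₂invPos_pow q
  have hgh : (g * h).coeff.support = Icc (1 - q : ℤ) (p - 1) := by
    rw [support_coeff_mul, hg, hh, Int.Icc_add_Icc (by omega) (by omega)]
    congr 1 <;> ring
  have hgT : (g * T (-q)).coeff.support = Icc (-q : ℤ) (p - 1 - q) := by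
    rw [support_coeff_mul, hg, support_coeff_T, ← Icc_self, Int.Icc_add_Icc (by omega) le_rfl]
    congr 1; ring
  have h00 : (T p + g * h).coeff.support = Icc (1 - q : ℤ) p := by
    rw [support_coeff_add, support_coeff_T, hgh]
    ext k; simp only [mem_union, mem_singleton, mem_Icc]; omega
  have hB : S₁Pos ^ p * S₂invPos ^ q = !![T p + g * h, g * T (-q); h, T (-q)] := by
    rw [hS₁, hS₂, Matrix.mul_fin_two]
    simp only [mul_one, mul_zero, one_mul, zero_add]
  rw [hB]
  constructor
  · intro i j k
    fin_cases i <;> fin_cases j <;>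
      simp only [Fin.zero_eta, Fin.mk_one, Matrix.of_apply, Matrix.cons_val_zero,
        Matrix.cons_val_one, h00, hgT, hh, support_coeff_T, mem_Icc, mem_singleton] <;> omega
  · simp only [Matrix.of_apply, Matrix.cons_val_zero, h00, subset_refl]
  · simp only [Matrix.of_apply, Matrix.cons_val_zero, Matrix.cons_val_one, hgT, mem_Icc]
    omega
  · simp only [Matrix.of_apply, Matrix.cons_val_zero, Matrix.cons_val_one, hh, mem_Icc]
    omega
  · simp only [Matrix.of_apply, Matrix.cons_val_zero, Matrix.cons_val_one, support_coeff_T,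
      mem_singleton]

theorem burauSupport_prod {pq : List (ℕ × ℕ)} (hne : pq ≠ [])
    (hpos : ∀ x ∈ pq, 0 < x.1 ∧ 0 < x.2) :
    BurauSupport (pq.map fun x => S₁Pos ^ x.1 * S₂invPos ^ x.2).prod
      (pq.map Prod.fst).sum (pq.map Prod.snd).sum := by
  induction pq with
  | nil => contradiction
  | cons x t ih =>
    have hx := hpos x List.mem_cons_self
    have hblock := burauSupport_S₁Pos_pow_mul_S₂invPos_pow hx.1 hx.2
    rcases eq_or_ne t [] with rfl | ht
    · simpa using hblock
    · simpa using hblock.mul (ih ht fun y hy => hpos y (List.mem_cons_of_mem _ hy))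

/-- For a nonempty list `(p₁,q₁), …, (p_s,q_s)` of pairs of positive integers, with
`p = p₁ + ⋯ + p_s` and `q = q₁ + ⋯ + q_s`, the trace of the Burau matrix
`M = S₁^{p₁}·S₂inv^{q₁} ⋯ S₁^{p_s}·S₂inv^{q_s}` has coefficient of `t^k` equal to zero for
`k > p` and for `k < -q`, while for every `-q ≤ k ≤ p` the coefficient of `t^k` is nonzero
with sign `(-1)^k`; in particular the trace has no gaps: its support is exactly
`{-q, …, p}`. -/
theorem burau_word_trace_no_gaps (pq : List (ℕ × ℕ)) (hne : pq ≠ [])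
    (hpos : ∀ x ∈ pq, 0 < x.1 ∧ 0 < x.2) :
    (∀ k : ℤ, ((pq.map Prod.fst).sum : ℤ) < k →
        (Matrix.trace ((pq.map fun x => S₁ ^ x.1 * S₂inv ^ x.2).prod)).coeff k = 0) ∧
    (∀ k : ℤ, k < -((pq.map Prod.snd).sum : ℤ) →
        (Matrix.trace ((pq.map fun x => S₁ ^ x.1 * S₂inv ^ x.2).prod)).coeff k = 0) ∧
    (∀ k : ℤ, -((pq.map Prod.snd).sum : ℤ) ≤ k → k ≤ ((pq.map Prod.fst).sum : ℤ) →
        0 < (Int.negOnePow k : ℤ) *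
          (Matrix.trace ((pq.map fun x => S₁ ^ x.1 * S₂inv ^ x.2).prod)).coeff k) := by
  have htrace : (pq.map fun x => S₁ ^ x.1 * S₂inv ^ x.2).prod.trace =
      evalNegT (pq.map fun x => S₁Pos ^ x.1 * S₂invPos ^ x.2).prod.trace := by
    rw [AddMonoidHom.map_trace, ← AlgHom.mapMatrix_apply, map_list_prod, List.map_map]
    simp only [Function.comp_def, map_mul, map_pow, mapMatrix_evalNegT_S₁Pos,
      mapMatrix_evalNegT_S₂invPos]
  have hsupp := (burauSupport_prod hne hpos).support_coeff_trace
  simp only [htrace, coeff_evalNegT]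
  refine ⟨fun k hk => ?_, fun k hk => ?_, fun k hk₁ hk₂ => ?_⟩
  · rw [Finsupp.notMem_support_iff.1 (by rw [hsupp, mem_Icc]; omega), Nat.cast_zero, mul_zero]
  · rw [Finsupp.notMem_support_iff.1 (by rw [hsupp, mem_Icc]; omega), Nat.cast_zero, mul_zero]
  · have hk : k ∈ _ := hsupp ▸ mem_Icc.2 ⟨hk₁, hk₂⟩
    rw [← mul_assoc, ← Units.val_mul, Int.units_mul_self, Units.val_one, one_mul]
    exact_mod_cast Nat.pos_of_ne_zero (Finsupp.mem_support_iff.1 hk)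
end
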